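/- arXiv:2304.03737 — 3 statements merged into one kernel-verified Lean document; each statement's English description precedes it below -/
import Mathlib

section
/- Let ζ be a primitive 12th root of unity in ℂ, let ℓ be an odd prime, f an odd positive integer with ℓ dividing 3^f − 1, and k any natural number. Then ζ^(ℓ^k) − ζ^(5·ℓ^k) = ζ − ζ^5. (This expresses that every Galois automorphism sending roots of unity of order prime to ℓ to their ℓ^k-th power fixes √3 = ζ − ζ^5.) -/
private lemma aux_not_sq : ¬ IsSquare (2 : ZMod 3) := by decide

private lemma aux_ne_zero : ((2 : ℕ) : ZMod 3) ≠ 0 := by decide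

theorem stmt_1 (ζ : ℂ) (hζ : IsPrimitiveRoot ζ 12) (ℓ f : ℕ) (hp : ℓ.Prime) (hodd : Odd ℓ)
    (hf : Odd f) (hf1 : 1 ≤ f) (hdvd : ℓ ∣ 3 ^ f - 1) (k : ℕ) :
    ζ ^ (ℓ ^ k) - ζ ^ (5 * ℓ ^ k) = ζ - ζ ^ 5 := by
  haveI : Fact ℓ.Prime := ⟨hp⟩
  haveI : Fact (Nat.Prime 3) := ⟨by norm_num⟩
  have hne2 : ℓ ≠ 2 := by rintro rfl; exact (by norm_num : ¬ Odd 2) hodd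
  have hne3 : ℓ ≠ 3 := by
    rintro rfl
    have h1 : (3 : ℕ) ∣ 3 ^ f := dvd_pow_self 3 (by omega)
    have h2 : 1 ≤ 3 ^ f := Nat.one_le_pow _ _ (by norm_num)
    omega
  -- (3 : ZMod ℓ) ^ f = 1
  have h1le : 1 ≤ 3 ^ f := Nat.one_le_pow _ _ (by norm_num)
  have hcast : ((3 ^ f - 1 : ℕ) : ZMod ℓ) = 0 :=
    (ZMod.natCast_eq_zero_iff _ _).mpr hdvd
  have hpow : (3 : ZMod ℓ) ^ f = 1 := by
    rw [Nat.cast_sub h1le] at hcast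
    push_cast at hcast
    exact sub_eq_zero.mp hcast
  -- 3 is a square mod ℓ
  have hsq : IsSquare (3 : ZMod ℓ) := by
    obtain ⟨c, hc⟩ := hf
    refine ⟨3 ^ (c + 1), ?_⟩
    have h3 : (3 : ZMod ℓ) = 3 ^ (f + 1) := by rw [pow_succ, hpow, one_mul]
    have h4 : (3 : ZMod ℓ) ^ (c + 1) * 3 ^ (c + 1) = 3 ^ (f + 1) := by
      rw [← pow_add, hc]; congr 1; omega
    rw [h4]; exact h3
  -- ℓ ≡ ±1 mod 12, via quadratic reciprocity
  have h3ne0 : ((3 : ℤ) : ZMod ℓ) ≠ 0 := by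
    intro h
    push_cast at h
    exact (hp.coprime_iff_not_dvd.mp
      ((Nat.coprime_primes hp (by norm_num)).mpr hne3)) ((ZMod.natCast_eq_zero_iff 3 ℓ).mp (by exact_mod_cast h))
  have hL1 : legendreSym ℓ 3 = 1 := by
    rw [legendreSym.eq_one_iff ℓ h3ne0]
    exact_mod_cast hsq
  have hrec : legendreSym ℓ 3 = (-1) ^ (ℓ / 2) * legendreSym 3 ℓ := by
    have := legendreSym.quadratic_reciprocity' (p := 3) (q := ℓ) (by norm_num) hne2
    simpa using this
  have hmod3 : ℓ % 3 = 1 ∨ ℓ % 3 = 2 := by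
    have : ¬ (3 ∣ ℓ) := fun h => hne3 ((Nat.prime_dvd_prime_iff_eq (by norm_num) hp).mp h).symm
    omega
  have hmod4 : ℓ % 4 = 1 ∨ ℓ % 4 = 3 := by
    obtain ⟨c, hc⟩ := hodd; omega
  have h12 : ℓ % 12 = 1 ∨ ℓ % 12 = 11 := by
    have hLval : legendreSym 3 ℓ = 1 ∨ legendreSym 3 ℓ = -1 := by
      rcases hmod3 with h | h
      · left
        rw [legendreSym.eq_one_iff]
        · refine ⟨1, ?_⟩
          have : ((ℓ : ℤ) : ZMod 3) = ((ℓ % 3 : ℕ) : ZMod 3) := by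
            push_cast [ZMod.natCast_mod]; rfl
          rw [this, h]; norm_num
        · have : ((ℓ : ℤ) : ZMod 3) = ((ℓ % 3 : ℕ) : ZMod 3) := by
            push_cast [ZMod.natCast_mod]; rfl
          rw [this, h]; norm_num
      · right
        rw [legendreSym.eq_neg_one_iff]
        have : ((ℓ : ℤ) : ZMod 3) = ((ℓ % 3 : ℕ) : ZMod 3) := by
          push_cast [ZMod.natCast_mod]; rfl
        rw [this, h]
        simpa using aux_not_sq
    rcases hmod4 with h4 | h4 <;> rcases hmod3 with h3 | h3
    · omega
    · -- ℓ % 4 = 1, ℓ % 3 = 2 : contradiction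
      exfalso
      have he : (-1 : ℤ) ^ (ℓ / 2) = 1 := ZMod.neg_one_pow_div_two_of_one_mod_four h4
      have : legendreSym 3 ℓ = -1 := by
        rcases hLval with h | h
        · exfalso
          have := legendreSym.eq_one_iff (p := 3) (a := (ℓ : ℤ)) (by
            have : ((ℓ : ℤ) : ZMod 3) = ((ℓ % 3 : ℕ) : ZMod 3) := by
              push_cast [ZMod.natCast_mod]; rfl
            rw [this, h3]; exact aux_ne_zero)
          have hs : IsSquare (((ℓ : ℤ) : ZMod 3)) := this.mp h
          have he2 : ((ℓ : ℤ) : ZMod 3) = 2 := by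
            have : ((ℓ : ℤ) : ZMod 3) = ((ℓ % 3 : ℕ) : ZMod 3) := by
              push_cast [ZMod.natCast_mod]; rfl
            rw [this, h3]; rfl
          rw [he2] at hs
          exact aux_not_sq hs
        · exact h
      rw [hrec, he, this] at hL1
      norm_num at hL1
    · -- ℓ % 4 = 3, ℓ % 3 = 1 : contradiction
      exfalso
      have he : (-1 : ℤ) ^ (ℓ / 2) = -1 := ZMod.neg_one_pow_div_two_of_three_mod_four h4
      have hone : legendreSym 3 ℓ = 1 := by
        rw [legendreSym.eq_one_iff]
        · refine ⟨1, ?_⟩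
          have : ((ℓ : ℤ) : ZMod 3) = ((ℓ % 3 : ℕ) : ZMod 3) := by
            push_cast [ZMod.natCast_mod]; rfl
          rw [this, h3]; norm_num
        · have : ((ℓ : ℤ) : ZMod 3) = ((ℓ % 3 : ℕ) : ZMod 3) := by
            push_cast [ZMod.natCast_mod]; rfl
          rw [this, h3]; norm_num
      rw [hrec, he, hone] at hL1
      norm_num at hL1
    · omega
  -- hence ℓ ^ k ≡ ±1 mod 12
  have hm : ℓ ^ k % 12 = 1 ∨ ℓ ^ k % 12 = 11 := by
    induction k with
    | zero => left; rfl
    | succ n ih =>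
      rw [pow_succ, Nat.mul_mod]
      rcases ih with h | h <;> rcases h12 with h' | h' <;> rw [h, h'] <;> simp
  -- transfer to ζ
  have h12one : ζ ^ 12 = 1 := hζ.pow_eq_one
  have key : ∀ n : ℕ, ζ ^ n = ζ ^ (n % 12) := by
    intro n
    conv_lhs => rw [← Nat.div_add_mod n 12]
    rw [pow_add, pow_mul, h12one, one_pow, one_mul]
  have hζ6 : ζ ^ 6 = -1 := by
    have hfact : (ζ ^ 6 - 1) * (ζ ^ 6 + 1) = 0 := by linear_combination h12one
    rcases mul_eq_zero.mp hfact with h | h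
    · exact absurd (sub_eq_zero.mp h) (hζ.pow_ne_one_of_pos_of_lt (by norm_num) (by norm_num))
    · exact eq_neg_of_add_eq_zero_left h
  rcases hm with h | h
  · rw [key (ℓ ^ k), key (5 * ℓ ^ k), Nat.mul_mod, h]
    norm_num
  · rw [key (ℓ ^ k), key (5 * ℓ ^ k), Nat.mul_mod, h]
    norm_num
    linear_combination (ζ ^ 5 - ζ) * hζ6
end

section
/- Let ℓ be an odd prime and f an odd positive integer. If ℓ divides 3^f + 1, then ℓ ≡ 1 (mod 12) or ℓ ≡ 7 (mod 12). -/
/-!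
Reducing `3 ^ f ≡ -1` modulo `ℓ` and using that `f` is odd, `(-3) ^ (f + 1) = -3`, so `-3` is a
square mod `ℓ`. If `t ^ 2 = -3` then `ω = (t - 1) / 2` satisfies `ω ^ 2 + ω + 1 = 0`, a primitive
cube root of unity, so `3 ∣ ℓ - 1`; together with `ℓ` odd this gives `ℓ ≡ 1, 7 (mod 12)`.
-/

theorem isSquare_neg_of_pow_eq_neg_one {M : Type*} [Monoid M] [HasDistribNeg M] {a : M} {f : ℕ}
    (hf : Odd f) (h : a ^ f = -1) : IsSquare (-a) := by
  obtain ⟨k, rfl⟩ := hf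
  refine ⟨(-a) ^ (k + 1), ?_⟩
  rw [← pow_add, show k + 1 + (k + 1) = 2 * k + 1 + 1 by ring, pow_succ, Odd.neg_pow ⟨k, rfl⟩, h,
    neg_neg, one_mul]

theorem exists_orderOf_eq_three_of_isSquare_neg_three {K : Type*} [Field K] (h2 : (2 : K) ≠ 0)
    (h3 : (3 : K) ≠ 0) (hsq : IsSquare (-3 : K)) : ∃ ω : K, orderOf ω = 3 := by
  obtain ⟨t, ht⟩ := hsq
  have hω : ((t - 1) / 2) ^ 2 + (t - 1) / 2 + 1 = 0 := by
    field_simp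
    linear_combination -ht
  refine ⟨(t - 1) / 2, orderOf_eq_prime ?_ ?_⟩
  · linear_combination ((t - 1) / 2 - 1) * hω
  · intro h1
    rw [h1] at hω
    exact h3 (by linear_combination hω)

theorem three_dvd_sub_one_of_isSquare_neg_three {p : ℕ} [Fact p.Prime] (h2 : (2 : ZMod p) ≠ 0)
    (h3 : (3 : ZMod p) ≠ 0) (hsq : IsSquare (-3 : ZMod p)) : 3 ∣ p - 1 := by
  obtain ⟨ω, hω⟩ := exists_orderOf_eq_three_of_isSquare_neg_three h2 h3 hsq
  have hω0 : ω ≠ 0 := by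
    rintro rfl
    simp at hω
  exact hω ▸ ZMod.orderOf_dvd_card_sub_one hω0

theorem stmt_2_general (ℓ f : ℕ) (hp : ℓ.Prime) (hodd : Odd ℓ) (hf : Odd f)
    (hdvd : ℓ ∣ 3 ^ f + 1) : ℓ % 12 = 1 ∨ ℓ % 12 = 7 := by
  have : Fact ℓ.Prime := ⟨hp⟩
  have hpow : (3 : ZMod ℓ) ^ f = -1 := by
    have := (ZMod.natCast_eq_zero_iff _ _).mpr hdvd
    push_cast at this
    linear_combination this
  have h3 : (3 : ZMod ℓ) ≠ 0 := by
    intro h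
    rw [h, zero_pow hf.pos.ne'] at hpow
    exact one_ne_zero (neg_eq_zero.mp hpow.symm)
  have h2 : (2 : ZMod ℓ) ≠ 0 := by
    intro h
    have := (ZMod.natCast_eq_zero_iff 2 ℓ).mp (by exact_mod_cast h)
    rw [(Nat.prime_dvd_prime_iff_eq hp Nat.prime_two).mp this] at hodd
    exact absurd hodd (by decide)
  have h3dvd := three_dvd_sub_one_of_isSquare_neg_three h2 h3
    (isSquare_neg_of_pow_eq_neg_one hf hpow)
  have := Nat.odd_iff.mp hodd
  have := hp.two_le
  omega

theorem stmt_2 (ℓ f : ℕ) (hp : ℓ.Prime) (hodd : Odd ℓ) (hf : Odd f) (hf1 : 1 ≤ f)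
    (hdvd : ℓ ∣ 3 ^ f + 1) : ℓ % 12 = 1 ∨ ℓ % 12 = 7 :=
  stmt_2_general ℓ f hp hodd hf hdvd
end

section
/- Let ζ be a primitive 8th root of unity in ℂ, let ℓ be an odd prime, f an odd positive integer with ℓ dividing 2^f − 1, and k any natural number. Then ζ^(ℓ^k) + ζ^(7·ℓ^k) = ζ + ζ^7. (This expresses that every Galois automorphism sending roots of unity of order prime to ℓ to their ℓ^k-th power fixes √2 = ζ + ζ^7.) -/
theorem stmt_7 (ζ : ℂ) (hζ : IsPrimitiveRoot ζ 8) (ℓ f : ℕ) (hp : ℓ.Prime) (hodd : Odd ℓ)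
    (hf : Odd f) (hf1 : 1 ≤ f) (hdvd : ℓ ∣ 2 ^ f - 1) (k : ℕ) :
    ζ ^ (ℓ ^ k) + ζ ^ (7 * ℓ ^ k) = ζ + ζ ^ 7 := by
  have hne2 : ℓ ≠ 2 := by rintro rfl; simp [Nat.odd_iff] at hodd
  haveI : Fact ℓ.Prime := ⟨hp⟩
  -- 2 is a square mod ℓ
  have h2f : (2 : ZMod ℓ) ^ f = 1 := by
    have h1 : (1 : ℕ) ≤ 2 ^ f := Nat.one_le_two_pow
    have : ((2 ^ f - 1 : ℕ) : ZMod ℓ) = 0 := (ZMod.natCast_eq_zero_iff _ _).mpr hdvd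
    rw [Nat.cast_sub h1] at this
    push_cast at this
    linear_combination this
  have hsq : IsSquare (2 : ZMod ℓ) := by
    obtain ⟨m, hm⟩ := hf
    refine ⟨2 ^ ((f + 1) / 2), ?_⟩
    rw [← pow_add, show (f + 1) / 2 + (f + 1) / 2 = f + 1 by omega, pow_succ, h2f, one_mul]
  have hmod : ℓ % 8 = 1 ∨ ℓ % 8 = 7 := by
    have := (ZMod.exists_sq_eq_two_iff hne2).mp hsq
    have h2 : ℓ % 2 = 1 := Nat.odd_iff.mp hodd
    omega
  -- ℓ^k % 8 ∈ {1, 7}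
  have hpow : ℓ ^ k % 8 = 1 ∨ ℓ ^ k % 8 = 7 := by
    induction k with
    | zero => left; rfl
    | succ n ih =>
      rw [pow_succ, Nat.mul_mod]
      rcases ih with h | h <;> rcases hmod with h' | h' <;> rw [h, h'] <;> simp
  have h8 : ζ ^ 8 = 1 := hζ.pow_eq_one
  have key : ∀ n : ℕ, ζ ^ n = ζ ^ (n % 8) := fun n => pow_eq_pow_mod n h8
  rcases hpow with h | h
  · rw [key (ℓ ^ k), key (7 * ℓ ^ k), Nat.mul_mod, h]
    norm_num
  · rw [key (ℓ ^ k), key (7 * ℓ ^ k), Nat.mul_mod, h]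
    norm_num
    ring
end
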